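/- Let k0, k1, k2 be natural numbers and M ⊆ ℝ^{k0} a nonempty set. Let φ1 : ℝ^{k0} → ℝ^{k1} and φ2 : ℝ^{k0} → ℝ^{k2} be linear maps such that there exist constants c1 ≥ 1 and c2 > 0 with ‖φ1(u)‖ = c1‖u‖ and ‖φ2(u)‖ = c2‖u‖ for all u. Set φ(u) = (φ1(u), φ2(u)) ∈ ℝ^{k1} × ℝ^{k2}, so that ‖φ(u)‖ = c‖u‖ with c = √(c1² + c2²). Let v = (v1, v2) ∈ ℝ^{k1} × ℝ^{k2}, and suppose y0 ∈ M satisfies ‖v − φ(y0)‖ ≤ ‖v − φ(y)‖ for all y ∈ M (so d := ‖v − φ(y0)‖ is the distance from v to φ(M)), and y1 ∈ M satisfies ‖v1 − φ1(y1)‖ ≤ ‖v1 − φ1(y)‖ for all y ∈ M. Then ‖v − φ(y1)‖ ≤ (1 + 2c)·d. -/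

import Mathlib

/-! Regard `φ = (φ1, φ2)` as a linear map into the `ℓ²` product `WithLp 2 (ℝ^{k1} × ℝ^{k2})`,
where it scales norms by `c = √(c1² + c2²)`, and write `d = ‖v - φ y0‖`. Since `y1` is at least as
close as `y0` to `v1` under `φ1`, the triangle inequality gives
`c1‖y0 - y1‖ ≤ 2‖v1 - φ1 y0‖ ≤ 2d`, so `‖y0 - y1‖ ≤ 2d` as `c1 ≥ 1`. Hence
`‖v - φ y1‖ ≤ d + c‖y0 - y1‖ ≤ (1 + 2c)d`. -/

open WithLp

section
variable {𝓕 E F : Type*} [SeminormedAddCommGroup E] [SeminormedAddCommGroup F]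
  [FunLike 𝓕 E F] [AddMonoidHomClass 𝓕 E F]

theorem mul_norm_sub_le_two_mul_of_norm_sub_le {f : 𝓕} {c : ℝ} (hf : ∀ u, ‖f u‖ = c * ‖u‖)
    {v : F} {y₀ y₁ : E} (h : ‖v - f y₁‖ ≤ ‖v - f y₀‖) :
    c * ‖y₀ - y₁‖ ≤ 2 * ‖v - f y₀‖ := by
  calc c * ‖y₀ - y₁‖ = ‖f y₀ - f y₁‖ := by rw [← map_sub, hf]
    _ ≤ ‖f y₀ - v‖ + ‖v - f y₁‖ := norm_sub_le_norm_sub_add_norm_sub _ _ _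
    _ ≤ 2 * ‖v - f y₀‖ := by rw [norm_sub_rev (f y₀)]; linarith

theorem norm_sub_map_le_add_mul_norm_sub {f : 𝓕} {c : ℝ} (hf : ∀ u, ‖f u‖ = c * ‖u‖)
    (v : F) (y₀ y₁ : E) : ‖v - f y₁‖ ≤ ‖v - f y₀‖ + c * ‖y₀ - y₁‖ := by
  calc ‖v - f y₁‖ ≤ ‖v - f y₀‖ + ‖f y₀ - f y₁‖ := norm_sub_le_norm_sub_add_norm_sub _ _ _
    _ = ‖v - f y₀‖ + c * ‖y₀ - y₁‖ := by rw [← map_sub, hf]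

end

theorem WithLp.norm_toLp_prod_of_norm_eq_mul {α β : Type*} [SeminormedAddCommGroup α]
    [SeminormedAddCommGroup β] {a : α} {b : β} {c₁ c₂ r : ℝ} (hr : 0 ≤ r)
    (ha : ‖a‖ = c₁ * r) (hb : ‖b‖ = c₂ * r) :
    ‖toLp 2 (a, b)‖ = √(c₁ ^ 2 + c₂ ^ 2) * r := by
  rw [prod_norm_eq_of_L2, toLp_fst, toLp_snd, ha, hb, mul_pow, mul_pow, ← add_mul,
    Real.sqrt_mul (by positivity), Real.sqrt_sq hr]

theorem stmt11_general (k0 k1 k2 : ℕ) (M : Set (EuclideanSpace ℝ (Fin k0)))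
    (φ1 : EuclideanSpace ℝ (Fin k0) →ₗ[ℝ] EuclideanSpace ℝ (Fin k1))
    (φ2 : EuclideanSpace ℝ (Fin k0) →ₗ[ℝ] EuclideanSpace ℝ (Fin k2))
    (c1 c2 : ℝ) (hc1 : 1 ≤ c1)
    (hφ1 : ∀ u, ‖φ1 u‖ = c1 * ‖u‖) (hφ2 : ∀ u, ‖φ2 u‖ = c2 * ‖u‖)
    (v1 : EuclideanSpace ℝ (Fin k1)) (v2 : EuclideanSpace ℝ (Fin k2))
    (y0 y1 : EuclideanSpace ℝ (Fin k0)) (hy0 : y0 ∈ M)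
    (hmin1 : ∀ y ∈ M, ‖v1 - φ1 y1‖ ≤ ‖v1 - φ1 y‖) :
    Real.sqrt (‖v1 - φ1 y1‖ ^ 2 + ‖v2 - φ2 y1‖ ^ 2) ≤
      (1 + 2 * Real.sqrt (c1 ^ 2 + c2 ^ 2)) *
        Real.sqrt (‖v1 - φ1 y0‖ ^ 2 + ‖v2 - φ2 y0‖ ^ 2) := by
  let φ := (WithLp.linearEquiv 2 ℝ _).symm.toLinearMap ∘ₗ φ1.prod φ2
  have hφ : ∀ u, ‖φ u‖ = √(c1 ^ 2 + c2 ^ 2) * ‖u‖ := fun u =>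
    norm_toLp_prod_of_norm_eq_mul (norm_nonneg u) (hφ1 u) (hφ2 u)
  have hdist : ∀ y, √(‖v1 - φ1 y‖ ^ 2 + ‖v2 - φ2 y‖ ^ 2) = ‖toLp 2 (v1, v2) - φ y‖ :=
    fun y => (prod_norm_eq_of_L2 (toLp 2 (v1, v2) - φ y)).symm
  simp only [hdist]
  set d := ‖toLp 2 (v1, v2) - φ y0‖
  have hy : ‖y0 - y1‖ ≤ 2 * d := calc
    ‖y0 - y1‖ ≤ c1 * ‖y0 - y1‖ := le_mul_of_one_le_left (norm_nonneg _) hc1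
    _ ≤ 2 * ‖v1 - φ1 y0‖ := mul_norm_sub_le_two_mul_of_norm_sub_le hφ1 (hmin1 y0 hy0)
    _ ≤ 2 * d := by gcongr; exact WithLp.norm_fst_le _ (toLp 2 (v1, v2) - φ y0)
  calc ‖toLp 2 (v1, v2) - φ y1‖ ≤ d + √(c1 ^ 2 + c2 ^ 2) * ‖y0 - y1‖ :=
        norm_sub_map_le_add_mul_norm_sub hφ _ _ _
    _ ≤ d + √(c1 ^ 2 + c2 ^ 2) * (2 * d) := by gcongr
    _ = (1 + 2 * √(c1 ^ 2 + c2 ^ 2)) * d := by ring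

/-- Let `φ = φ1 × φ2 : ℝ^{k0} → ℝ^{k1} × ℝ^{k2}` with `‖φ1 u‖ = c1‖u‖` (`c1 ≥ 1`)
and `‖φ2 u‖ = c2‖u‖` (`c2 > 0`), so `‖φ u‖ = c‖u‖` with `c = √(c1² + c2²)`.
If `y0 ∈ M` realizes the distance `d` from `v = (v1, v2)` to `φ(M)` and `y1 ∈ M`
realizes the distance from `v1` to `φ1(M)`, then `‖v − φ(y1)‖ ≤ (1 + 2c)·d`. -/
theorem stmt11 (k0 k1 k2 : ℕ) (M : Set (EuclideanSpace ℝ (Fin k0))) (hM : M.Nonempty)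
    (φ1 : EuclideanSpace ℝ (Fin k0) →ₗ[ℝ] EuclideanSpace ℝ (Fin k1))
    (φ2 : EuclideanSpace ℝ (Fin k0) →ₗ[ℝ] EuclideanSpace ℝ (Fin k2))
    (c1 c2 : ℝ) (hc1 : 1 ≤ c1) (hc2 : 0 < c2)
    (hφ1 : ∀ u, ‖φ1 u‖ = c1 * ‖u‖) (hφ2 : ∀ u, ‖φ2 u‖ = c2 * ‖u‖)
    (v1 : EuclideanSpace ℝ (Fin k1)) (v2 : EuclideanSpace ℝ (Fin k2))
    (y0 y1 : EuclideanSpace ℝ (Fin k0)) (hy0 : y0 ∈ M) (hy1 : y1 ∈ M)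
    (hmin0 : ∀ y ∈ M,
      Real.sqrt (‖v1 - φ1 y0‖ ^ 2 + ‖v2 - φ2 y0‖ ^ 2) ≤
        Real.sqrt (‖v1 - φ1 y‖ ^ 2 + ‖v2 - φ2 y‖ ^ 2))
    (hmin1 : ∀ y ∈ M, ‖v1 - φ1 y1‖ ≤ ‖v1 - φ1 y‖) :
    Real.sqrt (‖v1 - φ1 y1‖ ^ 2 + ‖v2 - φ2 y1‖ ^ 2) ≤
      (1 + 2 * Real.sqrt (c1 ^ 2 + c2 ^ 2)) *
        Real.sqrt (‖v1 - φ1 y0‖ ^ 2 + ‖v2 - φ2 y0‖ ^ 2) :=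
  stmt11_general k0 k1 k2 M φ1 φ2 c1 c2 hc1 hφ1 hφ2 v1 v2 y0 y1 hy0 hmin1
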